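/- arXiv:0906.0650 — 2 statements merged into one kernel-verified Lean document; each statement's English description precedes it below -/
import Mathlib

section
/- Let R be a rack and A a commutative ring. Define the shifting maps σ_n : C^R_n(R;A) → C^R_{n−1}(R;A) on basis elements by σ_n(x₁, x₂, …, xₙ) = (x₂, …, xₙ). Then for every n ≥ 3, ∂_{n−1} ∘ σ_n = σ_{n−1} ∘ ∂_n. -/
/-- A rack in the convention of the paper: two binary operations `◁` (`tri`) and
`◀` (`triInv`) that are mutually inverse on the right and right self-distributive. -/
class PaperRack (α : Type*) where
  tri : α → α → α
  triInv : α → α → α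
  triInv_tri : ∀ a b, triInv (tri a b) b = a
  tri_triInv : ∀ a b, tri (triInv a b) b = a
  tri_tri : ∀ a b c, tri (tri a b) c = tri (tri a c) (tri b c)

/-- A quandle: a rack whose operations are idempotent. -/
class PaperQuandle (α : Type*) extends PaperRack α where
  tri_self : ∀ a, tri a a = a
  triInv_self : ∀ a, triInv a a = a

open PaperRack

/-- The rack chain module `C^R_n(R; A)`: the free `A`-module on `n`-tuples of
elements of `R` (for `n = 0` this is free on the unique empty tuple, i.e. `A`). -/
abbrev RackChains (R A : Type*) [CommRing A] (n : ℕ) : Type _ := (Fin n → R) →₀ A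

/-- The `i`-th "acted" face of a tuple: delete the `i`-th entry and act by it on all
earlier entries: `(x₁ ◁ x_i, …, x_{i−1} ◁ x_i, x_{i+1}, …, xₙ)`. -/
def dTop {R : Type*} [PaperRack R] {m : ℕ} (i : Fin (m + 1)) (x : Fin (m + 1) → R) :
    Fin m → R :=
  fun j => if ((i.succAbove j : Fin (m + 1)) : ℕ) < (i : ℕ)
    then tri (x (i.succAbove j)) (x i) else x (i.succAbove j)

/-- The `i`-th "deleted" face of a tuple: `(x₁, …, x_{i−1}, x_{i+1}, …, xₙ)`. -/
def dBot {R : Type*} {m : ℕ} (i : Fin (m + 1)) (x : Fin (m + 1) → R) : Fin m → R :=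
  fun j => x (i.succAbove j)

/-- The boundary map `∂_{m+1} : C^R_{m+1}(R;A) → C^R_m(R;A)`; for `m + 1 ≥ 2` it is
`∂_n(x₁,…,xₙ) = Σ_{i=1}^{n} (−1)^{n−i} [(x₁◁x_i,…,x_{i−1}◁x_i,x_{i+1},…,xₙ)
− (x₁,…,x_{i−1},x_{i+1},…,xₙ)]`, and `∂₁(x) = 1`. -/
noncomputable def rackBoundary (R A : Type*) [PaperRack R] [CommRing A] :
    (m : ℕ) → RackChains R A (m + 1) →ₗ[A] RackChains R A m
  | 0 => Finsupp.lsum A fun _ =>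
      LinearMap.toSpanSingleton A _ (Finsupp.single (fun i : Fin 0 => i.elim0) (1 : A))
  | (m + 1) => Finsupp.lsum A fun x => LinearMap.toSpanSingleton A _
      (∑ i : Fin (m + 2), ((-1 : A) ^ (m + 1 - (i : ℕ))) •
        (Finsupp.single (dTop i x) (1 : A) - Finsupp.single (dBot i x) (1 : A)))

/-- The degenerate chains `C^D_n(Q;A)`: the span of the `n`-tuples having two equal
adjacent entries. -/
noncomputable def Degen (R A : Type*) [CommRing A] (n : ℕ) : Submodule A (RackChains R A n) :=
  Submodule.span A
    { c | ∃ x : Fin n → R,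
        (∃ i : ℕ, ∃ h : i + 1 < n, x ⟨i, by omega⟩ = x ⟨i + 1, h⟩) ∧
        c = Finsupp.single x (1 : A) }

/-- The shifting map `σ_{m+1} : C^R_{m+1}(R;A) → C^R_m(R;A)`,
`(x₁, x₂, …, xₙ) ↦ (x₂, …, xₙ)`. -/
noncomputable def shiftMap (R A : Type*) [CommRing A] (m : ℕ) :
    RackChains R A (m + 1) →ₗ[A] RackChains R A m :=
  Finsupp.lmapDomain A A fun x : Fin (m + 1) → R => x ∘ Fin.succ

section Faces

variable {R : Type*} {m : ℕ}

lemma dTop_zero [PaperRack R] (x : Fin (m + 1) → R) : dTop 0 x = dBot 0 x := by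
  funext j
  simp [dTop, dBot]

lemma dTop_succ_comp_succ [PaperRack R] (i : Fin (m + 1)) (x : Fin (m + 2) → R) :
    dTop i.succ x ∘ Fin.succ = dTop i (x ∘ Fin.succ) := by
  funext j
  simp [dTop, Fin.succ_succAbove_succ]

lemma dBot_succ_comp_succ (i : Fin (m + 1)) (x : Fin (m + 2) → R) :
    dBot i.succ x ∘ Fin.succ = dBot i (x ∘ Fin.succ) := by
  funext j
  simp [dBot, Fin.succ_succAbove_succ]

end Faces

section Chains

variable (R A : Type*) [CommRing A] {m : ℕ}

lemma shiftMap_single (x : Fin (m + 1) → R) (a : A) :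
    shiftMap R A m (Finsupp.single x a) = Finsupp.single (x ∘ Fin.succ) a :=
  Finsupp.mapDomain_single

lemma rackBoundary_succ_single [PaperRack R] (x : Fin (m + 2) → R) :
    rackBoundary R A (m + 1) (Finsupp.single x 1) =
      ∑ i : Fin (m + 2), ((-1 : A) ^ (m + 1 - (i : ℕ))) •
        (Finsupp.single (dTop i x) (1 : A) - Finsupp.single (dBot i x) 1) := by
  simp [rackBoundary]

end Chains

/-- For every `n ≥ 3` (here `n = m + 3`), the shifting maps commute with the
boundaries: `∂_{n−1} ∘ σ_n = σ_{n−1} ∘ ∂_n`. -/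
theorem rackBoundary_comp_shiftMap (R A : Type*) [PaperRack R] [CommRing A] (m : ℕ) :
    (rackBoundary R A (m + 1)).comp (shiftMap R A (m + 2)) =
      (shiftMap R A (m + 1)).comp (rackBoundary R A (m + 2)) := by
  ext x : 2
  -- the face deleting `x₁` dies: its two summands agree, and the other faces shift along `σ`
  simp only [LinearMap.comp_apply, Finsupp.lsingle_apply, shiftMap_single,
    rackBoundary_succ_single, Fin.sum_univ_succ (n := m + 2), dTop_zero, sub_self, smul_zero,
    zero_add, map_sum, map_smul, map_sub, dTop_succ_comp_succ, dBot_succ_comp_succ,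
    Fin.val_succ, Nat.add_sub_add_right]
end

section
/- (Litherland–Nelson) Let Q be a quandle and A a commutative ring. Let • denote the A-bilinear concatenation product on rack chains, (x₁,…,xₙ) • (y₁,…,y_m) = (x₁,…,xₙ,y₁,…,y_m), and define α_n : C^R_n(Q;A) → C^R_n(Q;A) on basis elements by α_n(x₁, x₂, …, xₙ) = (x₁) • ((x₂) − (x₁)) • ((x₃) − (x₂)) • ⋯ • ((xₙ) − (x_{n−1})). Then: (i) ∂_n ∘ α_n = α_{n−1} ∘ ∂_n for all n ≥ 2 (with α₀ the identity of C^R_0), so α_* is a chain map; and (ii) for every n ≥ 1, C^R_n(Q;A) is the internal direct sum of the submodules C^D_n(Q;A) and α_n(C^R_n(Q;A)); consequently C^Q_n(Q;A) is isomorphic to α_n(C^R_n(Q;A)). -/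
open PaperRack

/-- The `A`-bilinear concatenation product `C^R_m(R;A) × C^R_1(R;A) → C^R_{m+1}(R;A)`,
`(x₁,…,x_m) • (y) = (x₁,…,x_m,y)`. -/
noncomputable def concatLast (R A : Type*) [CommRing A] (m : ℕ) :
    RackChains R A m →ₗ[A] RackChains R A 1 →ₗ[A] RackChains R A (m + 1) :=
  Finsupp.lsum A fun x => LinearMap.toSpanSingleton A _
    (Finsupp.lmapDomain A A fun y : Fin 1 → R => Fin.snoc x (y 0))

/-- The Litherland–Nelson chain `α_n(x₁,…,xₙ) = (x₁) • ((x₂) − (x₁)) • ⋯ •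
((xₙ) − (x_{n−1}))`. -/
noncomputable def alphaVal (R A : Type*) [CommRing A] :
    (n : ℕ) → (Fin n → R) → RackChains R A n
  | 0, x => Finsupp.single x 1
  | 1, x => Finsupp.single x 1
  | (m + 2), x =>
      concatLast R A (m + 1) (alphaVal R A (m + 1) fun i => x i.castSucc)
        (Finsupp.single (fun _ : Fin 1 => x (Fin.last (m + 1))) 1 -
          Finsupp.single (fun _ : Fin 1 => x ⟨m, by omega⟩) 1)

/-- The Litherland–Nelson map `α_n : C^R_n(Q;A) → C^R_n(Q;A)`. -/
noncomputable def alphaMap (R A : Type*) [CommRing A] (n : ℕ) :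
    RackChains R A n →ₗ[A] RackChains R A n :=
  Finsupp.lsum A fun x => LinearMap.toSpanSingleton A _ (alphaVal R A n x)


/-!
Write `u • z` for appending `z` to every tuple of a chain `u` (`snocPoint`) and
`γ(x) = α(x) • (xₙ)` (`alphaSnocLast`). The boundary obeys `∂(u • y) = u^y − u − (∂u) • y`,
where `u^y` is the coordinatewise action, and `α(u • z) = α(u) • z − γ(u)`; both `α` and `γ`
commute with the action. By induction on the length, `∂α = α∂` then reduces to the identity
`γ(∂x) + α(x)^y = α(∂x) • y + α(x)` for tuples `x` ending in `y`, which is where `y ◁ y = y`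
is used. For the splitting: `α` kills tuples with two equal adjacent entries and `α(x) ≡ x`
modulo such tuples, so `α` is an idempotent with kernel `C^D`, whose range is therefore a
complement of `C^D` isomorphic to `C^R / C^D`.
-/

section Chains

variable (R A : Type*) [CommRing A]

noncomputable def snocPoint (m : ℕ) (z : R) : RackChains R A m →ₗ[A] RackChains R A (m + 1) :=
  (concatLast R A m).flip (Finsupp.single (fun _ => z) 1)

noncomputable def alphaSnocLast (m : ℕ) : RackChains R A (m + 1) →ₗ[A] RackChains R A (m + 2) :=
  Finsupp.lsum A fun x => LinearMap.toSpanSingleton A _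
    (snocPoint R A (m + 1) (x (Fin.last m)) (alphaVal R A (m + 1) x))

variable {R A}

@[simp]
lemma snocPoint_single {m : ℕ} (z : R) (u : Fin m → R) (a : A) :
    snocPoint R A m z (Finsupp.single u a) = Finsupp.single (Fin.snoc u z) a := by
  simp [snocPoint, concatLast, Finsupp.mapDomain_single]

lemma alphaMap_single {n : ℕ} (x : Fin n → R) (a : A) :
    alphaMap R A n (Finsupp.single x a) = a • alphaVal R A n x := by
  simp [alphaMap]

lemma alphaSnocLast_single {m : ℕ} (x : Fin (m + 1) → R) (a : A) :
    alphaSnocLast R A m (Finsupp.single x a) =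
      a • snocPoint R A (m + 1) (x (Fin.last m)) (alphaVal R A (m + 1) x) := by
  simp [alphaSnocLast]

lemma alphaVal_snoc {m : ℕ} (w : Fin (m + 1) → R) (y : R) :
    alphaVal R A (m + 2) (Fin.snoc w y) =
      snocPoint R A (m + 1) y (alphaVal R A (m + 1) w) -
        snocPoint R A (m + 1) (w (Fin.last m)) (alphaVal R A (m + 1) w) := by
  rw [alphaVal, map_sub]
  have : (⟨m, by omega⟩ : Fin (m + 2)) = (Fin.last m).castSucc := rfl
  simp only [this, Fin.snoc_castSucc, Fin.snoc_last]
  rfl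

lemma alphaMap_one : alphaMap R A 1 = LinearMap.id :=
  Finsupp.lhom_ext fun x a => by simp [alphaMap_single, alphaVal]

lemma alphaMap_snocPoint {m : ℕ} (z : R) (u : RackChains R A (m + 1)) :
    alphaMap R A (m + 2) (snocPoint R A (m + 1) z u) =
      snocPoint R A (m + 1) z (alphaMap R A (m + 1) u) - alphaSnocLast R A m u := by
  induction u using Finsupp.induction_linear with
  | zero => simp
  | add u v hu hv => simp only [map_add, hu, hv]; abel
  | single w a =>
    simp [alphaMap_single, alphaSnocLast_single, alphaVal_snoc, smul_sub]

lemma alphaSnocLast_snocPoint {m : ℕ} (z : R) (u : RackChains R A (m + 1)) :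
    alphaSnocLast R A (m + 1) (snocPoint R A (m + 1) z u) =
      snocPoint R A (m + 2) z (alphaMap R A (m + 2) (snocPoint R A (m + 1) z u)) := by
  induction u using Finsupp.induction_linear with
  | zero => simp
  | add u v hu hv => simp only [map_add, hu, hv]
  | single w a => simp [alphaMap_single, alphaSnocLast_single]

lemma dBot_castSucc_snoc {m : ℕ} (i : Fin (m + 1)) (w : Fin (m + 1) → R) (y : R) :
    dBot i.castSucc (Fin.snoc w y) = Fin.snoc (dBot i w) y := by
  funext k
  induction k using Fin.lastCases with
  | last =>
    have : i.castSucc.succAbove (Fin.last m) = Fin.last (m + 1) := by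
      rw [Fin.succAbove_castSucc_of_le i _ (Fin.le_last i), Fin.succ_last]
    simp [dBot, this]
  | cast k => simp [dBot, Fin.castSucc_succAbove_castSucc]

lemma dBot_last_snoc {m : ℕ} (w : Fin m → R) (y : R) :
    dBot (Fin.last m) (Fin.snoc w y) = w := by
  funext k
  simp [dBot]

end Chains

section Rack

variable {R A : Type*} [PaperRack R] [CommRing A]

variable (R A) in
noncomputable def rackAct (n : ℕ) (z : R) : RackChains R A n →ₗ[A] RackChains R A n :=
  Finsupp.lmapDomain A A fun x j => tri (x j) z

lemma tri_snoc {m : ℕ} (w : Fin m → R) (y z : R) :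
    (fun j => tri (Fin.snoc (α := fun _ => R) w y j) z) =
      Fin.snoc (fun j => tri (w j) z) (tri y z) :=
  Fin.comp_snoc (fun r => tri r z) w y

@[simp]
lemma rackAct_single {n : ℕ} (z : R) (x : Fin n → R) (a : A) :
    rackAct R A n z (Finsupp.single x a) = Finsupp.single (fun j => tri (x j) z) a := by
  simp [rackAct]

lemma rackAct_snocPoint {m : ℕ} (y z : R) (u : RackChains R A m) :
    rackAct R A (m + 1) z (snocPoint R A m y u) =
      snocPoint R A m (tri y z) (rackAct R A m z u) := by
  induction u using Finsupp.induction_linear with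
  | zero => simp
  | add u v hu hv => simp only [map_add, hu, hv]
  | single w a => simp only [snocPoint_single, rackAct_single, tri_snoc]

lemma alphaVal_tri : ∀ (n : ℕ) (x : Fin n → R) (z : R),
    alphaVal R A n (fun j => tri (x j) z) = rackAct R A n z (alphaVal R A n x)
  | 0, x, z | 1, x, z => by simp [alphaVal]
  | m + 2, x, z => by
    induction x using Fin.snocCases with
    | snoc w y =>
      rw [tri_snoc, alphaVal_snoc, alphaVal_snoc, alphaVal_tri (m + 1) w z]
      simp [rackAct_snocPoint]

lemma alphaMap_rackAct {n : ℕ} (z : R) (u : RackChains R A n) :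
    alphaMap R A n (rackAct R A n z u) = rackAct R A n z (alphaMap R A n u) := by
  induction u using Finsupp.induction_linear with
  | zero => simp
  | add u v hu hv => simp only [map_add, hu, hv]
  | single w a => simp [alphaMap_single, alphaVal_tri]

lemma alphaSnocLast_rackAct {m : ℕ} (z : R) (u : RackChains R A (m + 1)) :
    alphaSnocLast R A m (rackAct R A (m + 1) z u) =
      rackAct R A (m + 2) z (alphaSnocLast R A m u) := by
  induction u using Finsupp.induction_linear with
  | zero => simp
  | add u v hu hv => simp only [map_add, hu, hv]
  | single w a => simp [alphaSnocLast_single, alphaVal_tri, rackAct_snocPoint]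

end Rack

section Boundary

variable {R A : Type*} [PaperRack R] [CommRing A]

lemma dTop_castSucc_snoc {m : ℕ} (i : Fin (m + 1)) (w : Fin (m + 1) → R) (y : R) :
    dTop i.castSucc (Fin.snoc w y) = Fin.snoc (dTop i w) y := by
  funext k
  induction k using Fin.lastCases with
  | last =>
    have : i.castSucc.succAbove (Fin.last m) = Fin.last (m + 1) := by
      rw [Fin.succAbove_castSucc_of_le i _ (Fin.le_last i), Fin.succ_last]
    simp [dTop, this]
  | cast k => simp [dTop, Fin.castSucc_succAbove_castSucc]

lemma dTop_last_snoc {m : ℕ} (w : Fin m → R) (y : R) :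
    dTop (Fin.last m) (Fin.snoc w y) = fun j => tri (w j) y := by
  funext k
  simp [dTop]

lemma rackBoundary_single {m : ℕ} (x : Fin (m + 2) → R) (a : A) :
    rackBoundary R A (m + 1) (Finsupp.single x a) =
      a • ∑ i : Fin (m + 2), ((-1 : A) ^ (m + 1 - (i : ℕ))) •
        (Finsupp.single (dTop i x) 1 - Finsupp.single (dBot i x) 1) := by
  simp [rackBoundary]

lemma rackBoundary_snocPoint {m : ℕ} (y : R) (u : RackChains R A (m + 2)) :
    rackBoundary R A (m + 2) (snocPoint R A (m + 2) y u) =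
      rackAct R A (m + 2) y u - u - snocPoint R A (m + 1) y (rackBoundary R A (m + 1) u) := by
  induction u using Finsupp.induction_linear with
  | zero => simp
  | add u v hu hv => simp only [map_add, hu, hv]; abel
  | single w a =>
    have sign (i : Fin (m + 2)) : (-1 : A) ^ (m + 2 - (i : ℕ)) = -(-1) ^ (m + 1 - (i : ℕ)) := by
      rw [show m + 2 - (i : ℕ) = m + 1 - i + 1 by omega, pow_succ, mul_neg_one]
    rw [snocPoint_single, rackBoundary_single, Fin.sum_univ_castSucc, rackBoundary_single]
    simp only [dTop_castSucc_snoc, dBot_castSucc_snoc, dTop_last_snoc, dBot_last_snoc,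
      Fin.val_castSucc, Fin.val_last, sign, Nat.sub_self, pow_zero, one_smul, neg_smul,
      Finset.sum_neg_distrib, map_smul, map_sum, map_sub, snocPoint_single, rackAct_single]
    simp only [smul_add, smul_sub, smul_neg, Finsupp.smul_single_one]
    abel

-- `∂₁` is the augmentation, so unlike `rackBoundary_snocPoint` there is no `(∂u) • y` term.
lemma rackBoundary_one_snocPoint (y : R) (u : RackChains R A 1) :
    rackBoundary R A 1 (snocPoint R A 1 y u) = rackAct R A 1 y u - u := by
  induction u using Finsupp.induction_linear with
  | zero => simp
  | add u v hu hv => simp only [map_add, hu, hv]; abel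
  | single w a =>
    have : dTop 0 w = dBot 0 w := Subsingleton.elim _ _
    rw [snocPoint_single, rackBoundary_single, Fin.sum_univ_castSucc, Fin.sum_univ_one,
      dTop_castSucc_snoc, dBot_castSucc_snoc, this, sub_self, smul_zero, dTop_last_snoc,
      dBot_last_snoc]
    simp [smul_sub]

end Boundary

section Quandle

variable {Q A : Type*} [PaperQuandle Q] [CommRing A]

lemma rackAct_snocPoint_self {m : ℕ} (y : Q) (u : RackChains Q A m) :
    rackAct Q A (m + 1) y (snocPoint Q A m y u) = snocPoint Q A m y (rackAct Q A m y u) := by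
  rw [rackAct_snocPoint, PaperQuandle.tri_self]

lemma alphaSnocLast_rackBoundary_add_rackAct_alphaVal_two (w : Fin 1 → Q) (y : Q) :
    alphaSnocLast Q A 0 (rackBoundary Q A 1 (Finsupp.single (Fin.snoc w y) 1)) +
        rackAct Q A 2 y (alphaVal Q A 2 (Fin.snoc w y)) =
      snocPoint Q A 1 y (alphaMap Q A 1 (rackBoundary Q A 1 (Finsupp.single (Fin.snoc w y) 1))) +
        alphaVal Q A 2 (Fin.snoc w y) := by
  have hγ : alphaSnocLast Q A 0 (Finsupp.single w 1) =
      snocPoint Q A 1 (w (Fin.last 0)) (Finsupp.single w 1) := by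
    simp [alphaSnocLast_single, alphaVal]
  rw [← snocPoint_single, alphaVal_snoc]
  simp only [rackBoundary_one_snocPoint, alphaMap_one, LinearMap.id_apply, map_sub,
    alphaSnocLast_rackAct, hγ, rackAct_snocPoint_self,
    show alphaVal Q A 1 w = Finsupp.single w 1 from rfl]
  abel

lemma alphaSnocLast_rackBoundary_add_rackAct_alphaVal (m : ℕ) (w : Fin (m + 1) → Q) (y : Q) :
    alphaSnocLast Q A m (rackBoundary Q A (m + 1) (Finsupp.single (Fin.snoc w y) 1)) +
        rackAct Q A (m + 2) y (alphaVal Q A (m + 2) (Fin.snoc w y)) =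
      snocPoint Q A (m + 1) y
          (alphaMap Q A (m + 1) (rackBoundary Q A (m + 1) (Finsupp.single (Fin.snoc w y) 1))) +
        alphaVal Q A (m + 2) (Fin.snoc w y) := by
  cases m with
  | zero => exact alphaSnocLast_rackBoundary_add_rackAct_alphaVal_two w y
  | succ m =>
    induction w using Fin.snocCases with
    | snoc v y' =>
      have hγ : alphaSnocLast Q A (m + 1) (Finsupp.single (Fin.snoc v y') 1) =
          snocPoint Q A (m + 2) y' (alphaVal Q A (m + 2) (Fin.snoc v y')) := by
        simp [alphaSnocLast_single]
      rw [← snocPoint_single, alphaVal_snoc]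
      simp only [rackBoundary_snocPoint, map_sub, alphaSnocLast_rackAct, hγ,
        alphaSnocLast_snocPoint, alphaMap_snocPoint, rackAct_snocPoint_self, alphaMap_rackAct,
        alphaMap_single, one_smul, Fin.snoc_last]
      abel

lemma rackBoundary_alphaMap_two (x : Fin 2 → Q) :
    rackBoundary Q A 1 (alphaMap Q A 2 (Finsupp.single x 1)) =
      alphaMap Q A 1 (rackBoundary Q A 1 (Finsupp.single x 1)) := by
  induction x using Fin.snocCases with
  | snoc w y =>
    have hfix : rackAct Q A 1 (w (Fin.last 0)) (Finsupp.single w 1) = Finsupp.single w 1 := by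
      rw [rackAct_single]
      congr
      funext j
      rw [Subsingleton.elim j (Fin.last 0), PaperQuandle.tri_self]
    rw [alphaMap_single, one_smul, alphaVal_snoc, ← snocPoint_single, alphaMap_one,
      LinearMap.id_apply, show alphaVal Q A 1 w = Finsupp.single w 1 from rfl, map_sub,
      rackBoundary_one_snocPoint, rackBoundary_one_snocPoint, hfix]
    abel

theorem rackBoundary_comp_alphaMap (m : ℕ) :
    (rackBoundary Q A (m + 1)).comp (alphaMap Q A (m + 2)) =
      (alphaMap Q A (m + 1)).comp (rackBoundary Q A (m + 1)) := by
  ext x : 2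
  simp only [LinearMap.comp_apply, Finsupp.lsingle_apply]
  induction m with
  | zero => exact rackBoundary_alphaMap_two x
  | succ m ih =>
    induction x using Fin.snocCases with
    | snoc w y =>
      induction w using Fin.snocCases with
      | snoc v y' =>
        have key := alphaSnocLast_rackBoundary_add_rackAct_alphaVal (A := A) m v y'
        have ih' := ih (Fin.snoc v y')
        rw [alphaMap_single, one_smul] at ih'
        rw [alphaMap_single, one_smul, alphaVal_snoc, ← snocPoint_single]
        simp only [map_sub, rackBoundary_snocPoint, alphaMap_snocPoint, alphaMap_rackAct,
          alphaMap_single, one_smul, ih', Fin.snoc_last]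
        linear_combination (norm := module) -key

end Quandle

namespace LinearMap

variable {R M : Type*} [Ring R] [AddCommGroup M] [Module R M] {f : M →ₗ[R] M}
  {p : Submodule R M}

lemma ker_eq_of_sub_self_mem (hp : p ≤ ker f) (h : ∀ v, f v - v ∈ p) : ker f = p :=
  le_antisymm (fun v hv => by simpa [mem_ker.mp hv] using p.neg_mem (h v)) hp

lemma isIdempotentElem_of_sub_self_mem_ker (h : ∀ v, f v - v ∈ ker f) : IsIdempotentElem f :=
  LinearMap.ext fun v => sub_eq_zero.mp (by simpa using h v)

lemma isCompl_range_of_sub_self_mem (hp : p ≤ ker f) (h : ∀ v, f v - v ∈ p) :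
    IsCompl p (range f) := by
  have hker := ker_eq_of_sub_self_mem hp h
  rw [← hker] at h ⊢
  exact (LinearMap.IsIdempotentElem.isCompl (isIdempotentElem_of_sub_self_mem_ker h)).symm

end LinearMap

section Degenerate

variable {R A : Type*} [CommRing A]

lemma snoc_mk_of_lt {m : ℕ} (w : Fin m → R) (y : R) {i : ℕ} (h : i < m) :
    Fin.snoc (α := fun _ => R) w y ⟨i, by omega⟩ = w ⟨i, h⟩ :=
  Fin.snoc_castSucc (i := ⟨i, h⟩) ..

lemma snoc_mk_self {m : ℕ} (w : Fin m → R) (y : R) :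
    Fin.snoc (α := fun _ => R) w y ⟨m, by omega⟩ = y :=
  Fin.snoc_last ..

lemma single_mem_degen {n : ℕ} {x : Fin n → R} (i : ℕ) (h : i + 1 < n)
    (hx : x ⟨i, by omega⟩ = x ⟨i + 1, h⟩) (a : A) : Finsupp.single x a ∈ Degen R A n := by
  rw [← Finsupp.smul_single_one]
  exact Submodule.smul_mem _ a (Submodule.subset_span ⟨x, ⟨i, h, hx⟩, rfl⟩)

lemma single_snoc_last_mem_degen {m : ℕ} (w : Fin (m + 1) → R) (a : A) :
    Finsupp.single (Fin.snoc w (w (Fin.last m))) a ∈ Degen R A (m + 2) :=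
  single_mem_degen m (by omega) (by rw [snoc_mk_of_lt w _ (by omega), snoc_mk_self]; rfl) a

lemma snocPoint_mem_degen {m : ℕ} (z : R) {d : RackChains R A m} (hd : d ∈ Degen R A m) :
    snocPoint R A m z d ∈ Degen R A (m + 1) := by
  induction hd using Submodule.span_induction with
  | mem c hc =>
    obtain ⟨x, ⟨i, h, hx⟩, rfl⟩ := hc
    rw [snocPoint_single]
    exact single_mem_degen i (by omega)
      (by rwa [snoc_mk_of_lt x z (by omega), snoc_mk_of_lt x z h]) 1
  | zero => simp
  | add c d _ _ hc hd => simpa using add_mem hc hd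
  | smul a c _ hc => simpa using Submodule.smul_mem _ a hc

lemma alphaVal_eq_zero_of_degenerate : ∀ {n : ℕ} (x : Fin n → R),
    (∃ i : ℕ, ∃ h : i + 1 < n, x ⟨i, by omega⟩ = x ⟨i + 1, h⟩) → alphaVal R A n x = 0
  | 0, _, ⟨i, h, _⟩ | 1, _, ⟨i, h, _⟩ => by omega
  | m + 2, x, ⟨i, h, hx⟩ => by
    induction x using Fin.snocCases with
    | snoc w y =>
      rw [alphaVal_snoc]
      rcases Nat.lt_or_ge (i + 1) (m + 1) with hi | hi
      · rw [snoc_mk_of_lt w y (by omega), snoc_mk_of_lt w y hi] at hx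
        simp [alphaVal_eq_zero_of_degenerate w ⟨i, hi, hx⟩]
      · obtain rfl : i = m := by omega
        rw [snoc_mk_of_lt w y (by omega), snoc_mk_self] at hx
        rw [show Fin.last i = ⟨i, _⟩ from rfl, hx, sub_self]

lemma alphaVal_sub_single_mem_degen : ∀ {n : ℕ} (x : Fin n → R),
    alphaVal R A n x - Finsupp.single x 1 ∈ Degen R A n
  | 0, x | 1, x => by simp [alphaVal]
  | m + 2, x => by
    induction x using Fin.snocCases with
    | snoc w y =>
      set d := alphaVal R A (m + 1) w - Finsupp.single w 1
      have hd : d ∈ Degen R A (m + 1) := alphaVal_sub_single_mem_degen w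
      have split : alphaVal R A (m + 2) (Fin.snoc w y) - Finsupp.single (Fin.snoc w y) 1 =
          snocPoint R A (m + 1) y d - snocPoint R A (m + 1) (w (Fin.last m)) d -
            Finsupp.single (Fin.snoc w (w (Fin.last m))) 1 := by
        simp only [d, alphaVal_snoc, map_sub, snocPoint_single]
        abel
      rw [split]
      exact sub_mem (sub_mem (snocPoint_mem_degen _ hd) (snocPoint_mem_degen _ hd))
        (single_snoc_last_mem_degen w 1)

lemma degen_le_ker_alphaMap (n : ℕ) : Degen R A n ≤ LinearMap.ker (alphaMap R A n) := by
  rw [Degen, Submodule.span_le]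
  rintro c ⟨x, hx, rfl⟩
  simp [alphaMap_single, alphaVal_eq_zero_of_degenerate x hx]

lemma alphaMap_sub_self_mem_degen {n : ℕ} (v : RackChains R A n) :
    alphaMap R A n v - v ∈ Degen R A n := by
  induction v using Finsupp.induction_linear with
  | zero => simp
  | add u v hu hv => simpa [add_sub_add_comm] using add_mem hu hv
  | single x a =>
    rw [alphaMap_single, ← Finsupp.smul_single_one, ← smul_sub]
    exact Submodule.smul_mem _ a (alphaVal_sub_single_mem_degen x)

lemma ker_alphaMap (n : ℕ) : LinearMap.ker (alphaMap R A n) = Degen R A n :=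
  LinearMap.ker_eq_of_sub_self_mem (degen_le_ker_alphaMap n) alphaMap_sub_self_mem_degen

lemma isCompl_degen_range_alphaMap (n : ℕ) :
    IsCompl (Degen R A n) (LinearMap.range (alphaMap R A n)) :=
  LinearMap.isCompl_range_of_sub_self_mem (degen_le_ker_alphaMap n) alphaMap_sub_self_mem_degen

end Degenerate

/-- Litherland–Nelson: (i) for every `n ≥ 2` (here `n = m + 2`), `∂_n ∘ α_n = α_{n−1} ∘ ∂_n`,
so `α_*` is a chain map; (ii) for every `n ≥ 1` (here `n = m + 1`), `C^R_n(Q;A)` is the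
internal direct sum of `C^D_n(Q;A)` and `α_n(C^R_n(Q;A))`; consequently `C^Q_n(Q;A)` is
isomorphic to `α_n(C^R_n(Q;A))`. -/
theorem litherland_nelson_splitting (Q A : Type*) [PaperQuandle Q] [CommRing A] :
    (∀ m : ℕ, (rackBoundary Q A (m + 1)).comp (alphaMap Q A (m + 2)) =
        (alphaMap Q A (m + 1)).comp (rackBoundary Q A (m + 1))) ∧
      (∀ m : ℕ, IsCompl (Degen Q A (m + 1)) (LinearMap.range (alphaMap Q A (m + 1))) ∧
        Nonempty ((RackChains Q A (m + 1) ⧸ Degen Q A (m + 1)) ≃ₗ[A]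
          ↥(LinearMap.range (alphaMap Q A (m + 1))))) :=
  ⟨rackBoundary_comp_alphaMap, fun m => ⟨isCompl_degen_range_alphaMap (m + 1),
    ⟨(Submodule.quotEquivOfEq _ _ (ker_alphaMap (m + 1)).symm).trans
      (LinearMap.quotKerEquivRange _)⟩⟩⟩
end
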